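/- arXiv:2504.14678 — 3 statements merged into one kernel-verified Lean document; each statement's English description precedes it below -/
import Mathlib

section
/- Suppose μ is a free measure on ℕ which is Rudin-Blass minimal, i.e. for every measure ν with ν ≤_RB μ one has μ ≤_RB ν. If μ is not a Q⁺-measure, then there exists a shift-invariant measure ν with ν ≤_RB μ. -/
open Filter

/-- A finitely additive probability measure defined on all subsets of `ℕ`. -/
def IsMeasure (μ : Set ℕ → ℝ) : Prop :=
  (∀ A : Set ℕ, 0 ≤ μ A ∧ μ A ≤ 1) ∧ μ Set.univ = 1 ∧
    ∀ A B : Set ℕ, Disjoint A B → μ (A ∪ B) = μ A + μ B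

/-- A measure is free if it vanishes on finite sets. -/
def IsFree (μ : Set ℕ → ℝ) : Prop := ∀ A : Set ℕ, A.Finite → μ A = 0

/-- A function is finite-to-one if all fibers are finite. -/
def FinToOne (f : ℕ → ℕ) : Prop := ∀ n : ℕ, (f ⁻¹' {n}).Finite

/-- Rudin-Blass reducibility: `ν ≤_RB μ` via a finite-to-one map. -/
def RBLe (ν μ : Set ℕ → ℝ) : Prop :=
  ∃ f : ℕ → ℕ, FinToOne f ∧ ∀ A : Set ℕ, μ (f ⁻¹' A) = ν A

/-- Rudin-Keisler reducibility: `ν ≤_RK μ`. -/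
def RKLe (ν μ : Set ℕ → ℝ) : Prop :=
  ∃ f : ℕ → ℕ, ∀ A : Set ℕ, μ (f ⁻¹' A) = ν A

/-- A measure is shift invariant if `μ(A + 1) = μ(A)`. -/
def ShiftInvariant (μ : Set ℕ → ℝ) : Prop :=
  ∀ A : Set ℕ, μ ((fun n => n + 1) '' A) = μ A

/-- A measure extends the asymptotic density. -/
def ExtendsDensity (μ : Set ℕ → ℝ) : Prop :=
  ∀ (A : Set ℕ) (d : ℝ),
    Tendsto (fun n : ℕ => ((A ∩ Set.Iio n).ncard : ℝ) / n) atTop (nhds d) → μ A = d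

/-- A partition of `ℕ` indexed by `ℕ`. -/
def IsPartition (A : ℕ → Set ℕ) : Prop :=
  Pairwise (Function.onFun Disjoint A) ∧ (⋃ n, A n) = Set.univ

/-- A selector of a partition: meets each piece in at most one point. -/
def IsSelector (S : Set ℕ) (A : ℕ → Set ℕ) : Prop :=
  ∀ n : ℕ, (S ∩ A n).Subsingleton

/-- A Q-measure: each partition into finite sets has a selector of full measure. -/
def IsQMeasure (μ : Set ℕ → ℝ) : Prop :=
  ∀ A : ℕ → Set ℕ, IsPartition A → (∀ n, (A n).Finite) →
    ∃ S : Set ℕ, IsSelector S A ∧ μ S = 1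

/-- A Q⁺-measure: each partition into finite sets has a selector of positive measure. -/
def IsQPlusMeasure (μ : Set ℕ → ℝ) : Prop :=
  ∀ A : ℕ → Set ℕ, IsPartition A → (∀ n, (A n).Finite) →
    ∃ S : Set ℕ, IsSelector S A ∧ 0 < μ S

/-- A P-measure: each partition has a pseudo-selector of the largest possible measure. -/
def IsPMeasure (μ : Set ℕ → ℝ) : Prop :=
  ∀ A : ℕ → Set ℕ, IsPartition A →
    ∃ S : Set ℕ, (∀ n, (S ∩ A n).Finite) ∧ μ S = 1 - ∑' n, μ (A n)

/-- A selective measure: each partition has a selector of the largest possible measure. -/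
def IsSelectiveMeasure (μ : Set ℕ → ℝ) : Prop :=
  ∀ A : ℕ → Set ℕ, IsPartition A →
    ∃ S : Set ℕ, IsSelector S A ∧ μ S = 1 - ∑' n, μ (A n)

/-- A non-atomic measure: finite partitions into pieces of arbitrarily small measure. -/
def NonAtomic (μ : Set ℕ → ℝ) : Prop :=
  ∀ ε : ℝ, 0 < ε → ∃ (N : ℕ) (P : Fin N → Set ℕ),
    Pairwise (Function.onFun Disjoint P) ∧ (⋃ i, P i) = Set.univ ∧ ∀ i, μ (P i) < ε

/-- The continuum hypothesis: `2 ^ ℵ₀ = ℵ₁`. -/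
def CH : Prop := (2 : Cardinal.{0}) ^ Cardinal.aleph0.{0} = Cardinal.aleph.{0} 1

/-
Since μ is not a Q⁺-measure, some partition of ℕ into finite pieces has only null selectors;
collapsing each piece to a point gives a finite-to-one `f` such that every set on which `f` is
injective is μ-null. Put `ν₀ = f[μ] ≤_RB μ`. Minimality yields a finite-to-one `g` with
`g[ν₀] = μ`, so `e = f ∘ g` satisfies `e[ν₀] = ν₀`, and sets on which `e` is injective are still
ν₀-null. Every self-map is injective on some set `F` that each forward orbit enters: the periodic
points together with one forward ray in each cycle-free component of its functional graph. A
height function `q` counting the steps to `F` satisfies `q = q ∘ e + 1` off the null set `F`, so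
`q[ν₀]` is shift invariant, and it is RB-below `μ`.
-/

open Function Set

def pushforward (f : ℕ → ℕ) (μ : Set ℕ → ℝ) : Set ℕ → ℝ := fun B => μ (f ⁻¹' B)

namespace IsMeasure

variable {μ : Set ℕ → ℝ}

lemma nonneg (hμ : IsMeasure μ) (A : Set ℕ) : 0 ≤ μ A := (hμ.1 A).1

lemma mono (hμ : IsMeasure μ) {X Y : Set ℕ} (h : X ⊆ Y) : μ X ≤ μ Y := by
  have hadd := hμ.2.2 X (Y \ X) disjoint_sdiff_right
  rw [union_sdiff_cancel h] at hadd
  linarith [hμ.nonneg (Y \ X)]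

lemma union_null (hμ : IsMeasure μ) {X W : Set ℕ} (hW : μ W = 0) : μ (X ∪ W) = μ X := by
  have hadd := hμ.2.2 X (W \ X) disjoint_sdiff_right
  rw [union_sdiff_self] at hadd
  linarith [hμ.mono (sdiff_subset (s := W) (t := X)), hμ.nonneg (W \ X)]

lemma congr_of_null (hμ : IsMeasure μ) {X Y W : Set ℕ} (hW : μ W = 0)
    (h : ∀ k ∉ W, k ∈ X ↔ k ∈ Y) : μ X = μ Y := by
  have hXY : X ∪ W = Y ∪ W := by
    ext k
    by_cases hk : k ∈ W <;> simp [hk, h]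
  rw [← hμ.union_null hW, hXY, hμ.union_null hW]

lemma pushforward (hμ : IsMeasure μ) (f : ℕ → ℕ) : IsMeasure (_root_.pushforward f μ) :=
  ⟨fun _ => hμ.1 _, hμ.2.1, fun _ _ hAB => hμ.2.2 _ _ (hAB.preimage f)⟩

end IsMeasure

lemma FinToOne.finite_preimage {f : ℕ → ℕ} (hf : FinToOne f) {S : Set ℕ} (hS : S.Finite) :
    (f ⁻¹' S).Finite :=
  hS.preimage' fun n _ => hf n

lemma FinToOne.comp {f g : ℕ → ℕ} (hf : FinToOne f) (hg : FinToOne g) : FinToOne (f ∘ g) :=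
  fun n => hg.finite_preimage (hf n)

lemma FinToOne.iterate {f : ℕ → ℕ} (hf : FinToOne f) : ∀ n, FinToOne f^[n]
  | 0 => fun m => by simp
  | n + 1 => (hf.iterate n).comp hf

lemma rbLe_pushforward {μ : Set ℕ → ℝ} {f : ℕ → ℕ} (hf : FinToOne f) :
    RBLe (pushforward f μ) μ :=
  ⟨f, hf, fun _ => rfl⟩

lemma RBLe.trans {ν ρ μ : Set ℕ → ℝ} (hνρ : RBLe ν ρ) (hρμ : RBLe ρ μ) : RBLe ν μ := by
  obtain ⟨f, hf, hfν⟩ := hνρ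
  obtain ⟨g, hg, hgρ⟩ := hρμ
  exact ⟨f ∘ g, hf.comp hg, fun A => (hgρ (f ⁻¹' A)).trans (hfν A)⟩

lemma IsPartition.exists_preimage_singleton_eq {A : ℕ → Set ℕ} (hA : IsPartition A) :
    ∃ f : ℕ → ℕ, ∀ n, f ⁻¹' {n} = A n := by
  have hcover : ∀ m, ∃ n, m ∈ A n := fun m => mem_iUnion.mp (hA.2 ▸ mem_univ m)
  choose f hf using hcover
  refine ⟨f, fun n => Set.ext fun m => ⟨fun hm => (hm : f m = n) ▸ hf m, fun hm => ?_⟩⟩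
  by_contra hne
  exact disjoint_left.mp (hA.1 hne) (hf m) hm

lemma isSelector_of_injOn {A : ℕ → Set ℕ} {f : ℕ → ℕ} (hf : ∀ n, f ⁻¹' {n} = A n)
    {S : Set ℕ} (hS : InjOn f S) : IsSelector S A := by
  rintro n x ⟨hxS, hxA⟩ y ⟨hyS, hyA⟩
  rw [← hf n] at hxA hyA
  exact hS hxS hyS ((hxA : f x = n).trans (hyA : f y = n).symm)

lemma exists_finToOne_forall_injOn_null {μ : Set ℕ → ℝ} (hμ : IsMeasure μ)
    (hQ : ¬ IsQPlusMeasure μ) :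
    ∃ f : ℕ → ℕ, FinToOne f ∧ ∀ S, InjOn f S → μ S = 0 := by
  simp only [IsQPlusMeasure, not_forall, not_exists, not_and, not_lt] at hQ
  obtain ⟨A, hA, hfin, hsel⟩ := hQ
  obtain ⟨f, hf⟩ := hA.exists_preimage_singleton_eq
  exact ⟨f, fun n => hf n ▸ hfin n,
    fun S hS => le_antisymm (hsel S (isSelector_of_injOn hf hS)) (hμ.nonneg S)⟩

lemma IsMeasure.null_of_injOn_comp {ν μ : Set ℕ → ℝ} (hν : IsMeasure ν) {f g : ℕ → ℕ}
    (hf : ∀ S, InjOn f S → μ S = 0) (hg : ∀ A, ν (g ⁻¹' A) = μ A) {T : Set ℕ}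
    (hT : InjOn (f ∘ g) T) : ν T = 0 := by
  refine le_antisymm ?_ (hν.nonneg T)
  calc ν T ≤ ν (g ⁻¹' (g '' T)) := hν.mono (subset_preimage_image g T)
    _ = 0 := (hg _).trans (hf _ hT.image_of_comp)

lemma shiftInvariant_pushforward {ν : Set ℕ → ℝ} (hν : IsMeasure ν) {e q : ℕ → ℕ}
    (hinv : ∀ B, ν (e ⁻¹' B) = ν B) {F : Set ℕ} (hF : ν F = 0)
    (hq : ∀ k ∉ F, q k = q (e k) + 1) : ShiftInvariant (pushforward q ν) := by
  intro B
  calc ν (q ⁻¹' ((· + 1) '' B)) = ν (e ⁻¹' (q ⁻¹' B)) :=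
        hν.congr_of_null hF fun k hk => by simp [hq k hk]
    _ = ν (q ⁻¹' B) := hinv _

section Transversal

variable {α : Type*}

def iterateSetoid (f : α → α) : Setoid α where
  r a b := ∃ m n, f^[m] a = f^[n] b
  iseqv := by
    refine ⟨fun a => ⟨0, 0, rfl⟩, fun ⟨m, n, h⟩ => ⟨n, m, h.symm⟩, ?_⟩
    rintro a b c ⟨m, n, h⟩ ⟨m', n', h'⟩
    refine ⟨m' + m, n + n', ?_⟩
    calc f^[m' + m] a = f^[m'] (f^[n] b) := by rw [iterate_add_apply, h]
      _ = f^[n] (f^[m'] b) := by rw [← iterate_add_apply, add_comm, iterate_add_apply]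
      _ = f^[n + n'] c := by rw [h', iterate_add_apply]

def eventuallyPeriodicPts (f : α → α) : Set α := {x | ∃ n, f^[n] x ∈ periodicPts f}

variable {f : α → α}

lemma mem_eventuallyPeriodicPts_of_rel {a b : α} (h : iterateSetoid f a b)
    (ha : a ∈ eventuallyPeriodicPts f) : b ∈ eventuallyPeriodicPts f := by
  obtain ⟨m, n, hmn⟩ := h
  obtain ⟨s, hs⟩ := ha
  refine ⟨s + n, ?_⟩
  rw [iterate_add_apply, ← hmn, ← iterate_add_apply, add_comm, iterate_add_apply]
  exact (bijOn_periodicPts f).mapsTo.iterate m hs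

lemma mem_eventuallyPeriodicPts_of_iterate_eq {x : α} {m n : ℕ} (hmn : m ≠ n)
    (h : f^[m] x = f^[n] x) : x ∈ eventuallyPeriodicPts f := by
  wlog hlt : m < n generalizing m n
  · exact this hmn.symm h.symm (by omega)
  refine ⟨m, mk_mem_periodicPts (Nat.sub_pos_of_lt hlt) ?_⟩
  change f^[n - m] (f^[m] x) = f^[m] x
  rw [← iterate_add_apply, Nat.sub_add_cancel hlt.le, h]

theorem exists_injOn_forall_exists_iterate_mem (f : α → α) :
    ∃ F : Set α, InjOn f F ∧ ∀ x, ∃ n, f^[n] x ∈ F := by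
  let rep : α → α := fun x => (Quotient.mk (iterateSetoid f) x).out
  have rep_rel (x : α) : iterateSetoid f (rep x) x := Quotient.mk_out x
  have rep_eq {x y : α} (h : iterateSetoid f x y) : rep x = rep y :=
    congrArg Quotient.out (Quotient.sound h)
  -- In a component without a cycle, the forward orbit of the representative is a ray.
  let ray : Set α := {y | y ∉ eventuallyPeriodicPts f ∧ ∃ n, f^[n] (rep y) = y}
  refine ⟨periodicPts f ∪ ray, ?_, fun x => ?_⟩
  · have not_ray_of_periodic {u v : α} (hu : u ∈ periodicPts f) (huv : f u = f v) : v ∉ ray :=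
      fun hv => hv.1 (mem_eventuallyPeriodicPts_of_rel ⟨1, 1, huv⟩ ⟨0, hu⟩)
    rintro u (hu | hu) v (hv | hv) huv
    · exact (bijOn_periodicPts f).injOn hu hv huv
    · exact absurd hv (not_ray_of_periodic hu huv)
    · exact absurd hu (not_ray_of_periodic hv huv.symm)
    obtain ⟨huE, i, hi⟩ := hu
    obtain ⟨-, j, hj⟩ := hv
    rw [rep_eq (⟨1, 1, huv⟩ : iterateSetoid f u v)] at hi
    have hij : i = j := by
      by_contra hij
      refine huE (mem_eventuallyPeriodicPts_of_rel ⟨i, 0, hi⟩ ?_)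
      refine mem_eventuallyPeriodicPts_of_iterate_eq (m := i + 1) (n := j + 1) (by omega) ?_
      rw [iterate_succ_apply', iterate_succ_apply', hi, hj, huv]
    subst hij
    exact hi.symm.trans hj
  · by_cases hx : x ∈ eventuallyPeriodicPts f
    · obtain ⟨n, hn⟩ := hx
      exact ⟨n, Or.inl hn⟩
    obtain ⟨m, n, hmn⟩ := rep_rel x
    have hxn : iterateSetoid f (f^[n] x) x := ⟨0, n, rfl⟩
    refine ⟨n, Or.inr ⟨fun h => hx (mem_eventuallyPeriodicPts_of_rel hxn h), m, ?_⟩⟩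
    rw [rep_eq hxn, hmn]

end Transversal

-- Adding the point where the orbit enters `F` to the entry time makes `q` finite-to-one.
theorem FinToOne.exists_height {e : ℕ → ℕ} (he : FinToOne e) {F : Set ℕ}
    (hF : ∀ k, ∃ n, e^[n] k ∈ F) : ∃ q : ℕ → ℕ, FinToOne q ∧ ∀ k ∉ F, q k = q (e k) + 1 := by
  classical
  set entry : ℕ → ℕ := fun k => Nat.find (hF k)
  have entry_succ (k : ℕ) (hk : k ∉ F) : entry k = entry (e k) + 1 :=
    Nat.find_comp_succ _ _ hk
  refine ⟨fun k => entry k + e^[entry k] k, fun m => ?_, fun k hk => ?_⟩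
  · refine ((finite_le_nat m).biUnion fun t _ => (he.iterate t).finite_preimage
      (finite_Iic m)).subset fun k (hk : entry k + e^[entry k] k = m) => ?_
    exact mem_biUnion (show entry k ≤ m by omega) (show e^[entry k] k ≤ m by omega)
  · simp only [entry_succ k hk, iterate_succ_apply]
    ring

theorem stmt_2_general (μ : Set ℕ → ℝ) (hμ : IsMeasure μ)
    (hmin : ∀ ν : Set ℕ → ℝ, IsMeasure ν → RBLe ν μ → RBLe μ ν)
    (hnotQ : ¬ IsQPlusMeasure μ) :
    ∃ ν : Set ℕ → ℝ, IsMeasure ν ∧ ShiftInvariant ν ∧ RBLe ν μ := by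
  obtain ⟨f, hf, hnull⟩ := exists_finToOne_forall_injOn_null hμ hnotQ
  have hν₀ : IsMeasure (pushforward f μ) := hμ.pushforward f
  have hν₀μ : RBLe (pushforward f μ) μ := rbLe_pushforward hf
  obtain ⟨g, hg, hgμ⟩ := hmin _ hν₀ hν₀μ
  obtain ⟨F, hFinj, hFhit⟩ := exists_injOn_forall_exists_iterate_mem (f ∘ g)
  obtain ⟨q, hq, hqF⟩ := (hf.comp hg).exists_height hFhit
  have hinv (B : Set ℕ) : pushforward f μ ((f ∘ g) ⁻¹' B) = pushforward f μ B := hgμ (f ⁻¹' B)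
  exact ⟨pushforward q (pushforward f μ), hν₀.pushforward q,
    shiftInvariant_pushforward hν₀ hinv (hν₀.null_of_injOn_comp hnull hgμ hFinj) hqF,
    (rbLe_pushforward hq).trans hν₀μ⟩

/-- An RB-minimal free measure which is not a Q⁺-measure has a shift-invariant
measure RB-below it. -/
theorem stmt_2 (μ : Set ℕ → ℝ) (hμ : IsMeasure μ) (hfree : IsFree μ)
    (hmin : ∀ ν : Set ℕ → ℝ, IsMeasure ν → RBLe ν μ → RBLe μ ν)
    (hnotQ : ¬ IsQPlusMeasure μ) :
    ∃ ν : Set ℕ → ℝ, IsMeasure ν ∧ ShiftInvariant ν ∧ RBLe ν μ :=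
  stmt_2_general μ hμ hmin hnotQ
end

section
/- A free measure μ on ℕ is selective if and only if it is both a P-measure and a Q-measure. -/
open Filter

/-!
Selective ⇒ P and Q: a selector meets every piece in a finite set, and for a partition into
finite pieces freeness makes `∑ μ(Aₙ) = 0`.
P and Q ⇒ selective: given a pseudo-selector `S` of `⟨Aₙ⟩` of the right measure, the sets
`(S ∩ Aₙ) ∪ ({n} \ S)` form a partition into finite sets. A full-measure selector `T` of it
selects at most one point of each `S ∩ Aₙ`, and `μ(S ∩ T) = μ(S)` since `μ(T) = 1`.
-/

theorem IsPartition.inter_union_diff {A B : ℕ → Set ℕ} (hA : IsPartition A)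
    (hB : IsPartition B) (S : Set ℕ) : IsPartition fun n => S ∩ A n ∪ B n \ S := by
  refine ⟨fun i j hij => Set.disjoint_left.mpr ?_, Set.eq_univ_of_forall fun x => ?_⟩
  · rintro x (⟨hxS, hxA⟩ | ⟨hxB, hxS⟩) (⟨hxS', hxA'⟩ | ⟨hxB', hxS'⟩)
    · exact Set.disjoint_left.mp (hA.1 hij) hxA hxA'
    · exact hxS' hxS
    · exact hxS hxS'
    · exact Set.disjoint_left.mp (hB.1 hij) hxB hxB'
  · by_cases hxS : x ∈ S
    · obtain ⟨n, hxA⟩ := Set.mem_iUnion.mp (hA.2 ▸ Set.mem_univ x)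
      exact Set.mem_iUnion.mpr ⟨n, Or.inl ⟨hxS, hxA⟩⟩
    · obtain ⟨n, hxB⟩ := Set.mem_iUnion.mp (hB.2 ▸ Set.mem_univ x)
      exact Set.mem_iUnion.mpr ⟨n, Or.inr ⟨hxB, hxS⟩⟩

theorem isPartition_singleton : IsPartition fun n => ({n} : Set ℕ) :=
  ⟨fun _ _ hij => Set.disjoint_singleton.mpr hij,
    Set.eq_univ_of_forall fun x => Set.mem_iUnion.mpr ⟨x, rfl⟩⟩

theorem IsMeasure.measure_inter_of_measure_eq_one {μ : Set ℕ → ℝ} (hμ : IsMeasure μ)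
    (S : Set ℕ) {T : Set ℕ} (hT : μ T = 1) : μ (S ∩ T) = μ S := by
  obtain ⟨hbounds, -, hadd⟩ := hμ
  have hsplit : μ S = μ (S ∩ T) + μ (S \ T) := by
    rw [← hadd _ _ Set.disjoint_sdiff_inter.symm, Set.inter_union_sdiff]
  have hunion : μ (S ∪ T) = μ (S \ T) + μ T := by
    rw [← hadd _ _ disjoint_sdiff_self_left, Set.sdiff_union_self]
  linarith [(hbounds (S ∪ T)).2, (hbounds (S \ T)).1]

theorem IsSelectiveMeasure.isPMeasure {μ : Set ℕ → ℝ} (hsel : IsSelectiveMeasure μ) :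
    IsPMeasure μ := fun A hA =>
  let ⟨S, hS, hμS⟩ := hsel A hA
  ⟨S, fun n => (hS n).finite, hμS⟩

theorem IsSelectiveMeasure.isQMeasure {μ : Set ℕ → ℝ} (hsel : IsSelectiveMeasure μ)
    (hfree : IsFree μ) : IsQMeasure μ := by
  intro A hA hfin
  obtain ⟨S, hS, hμS⟩ := hsel A hA
  have hsum : ∑' n, μ (A n) = 0 :=
    (tsum_congr fun n => hfree _ (hfin n)).trans tsum_zero
  exact ⟨S, hS, by rw [hμS, hsum, sub_zero]⟩

theorem isSelectiveMeasure_of_isPMeasure_of_isQMeasure {μ : Set ℕ → ℝ} (hμ : IsMeasure μ)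
    (hP : IsPMeasure μ) (hQ : IsQMeasure μ) : IsSelectiveMeasure μ := by
  intro A hA
  obtain ⟨S, hSfin, hμS⟩ := hP A hA
  obtain ⟨T, hT, hμT⟩ := hQ _ (hA.inter_union_diff isPartition_singleton S)
    fun n => (hSfin n).union (Set.finite_singleton n).sdiff
  refine ⟨S ∩ T, fun n => (hT n).anti ?_, by rw [hμ.measure_inter_of_measure_eq_one S hμT, hμS]⟩
  rintro x ⟨⟨hxS, hxT⟩, hxA⟩
  exact ⟨hxT, Or.inl ⟨hxS, hxA⟩⟩

/-- A free measure is selective iff it is both a P-measure and a Q-measure. -/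
theorem stmt_4 (μ : Set ℕ → ℝ) (hμ : IsMeasure μ) (hfree : IsFree μ) :
    IsSelectiveMeasure μ ↔ IsPMeasure μ ∧ IsQMeasure μ :=
  ⟨fun hsel => ⟨hsel.isPMeasure, hsel.isQMeasure hfree⟩,
    fun ⟨hP, hQ⟩ => isSelectiveMeasure_of_isPMeasure_of_isQMeasure hμ hP hQ⟩
end

section
/- Assume the continuum hypothesis (2^ℵ₀ = ℵ₁). Then there exists a free measure on ℕ which is non-atomic and a Q-measure. -/
open Filter

/-!
Under CH the partitions of `ℕ` into finite sets can be listed as `(P i)` for `i < ω₁`. By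
transfinite recursion build a `⊆*`-decreasing tower `(T i)` of selectors `T i` of `P i` that
meet every residue class mod `2 ^ k` infinitely often: at stage `i` only countably many sets
came before, and a diagonal argument picks a new one. On such a set `T`, enumerated by `x` with
`x t ≡ t [MOD 2 ^ t]`, the pull-back along `x` of an ultrafilter limit of the asymptotic density
is a free measure with `T` of measure `1` and each class mod `2 ^ k` of measure `2⁻ᵏ`. An
ultrafilter limit of these measures along `ω₁` keeps the latter property, and gives measure `1`
to every `T i` because the tower is decreasing.
-/

open Set Function Topology

section Measure

variable {μ : Set ℕ → ℝ}

theorem IsMeasure.preimage (hμ : IsMeasure μ) (f : ℕ → ℕ) : IsMeasure fun A => μ (f ⁻¹' A) :=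
  ⟨fun _ => hμ.1 _, hμ.2.1, fun _ _ hAB => hμ.2.2 _ _ (hAB.preimage f)⟩

theorem IsFree.preimage (hμ : IsFree μ) {f : ℕ → ℕ} (hf : Injective f) :
    IsFree fun A => μ (f ⁻¹' A) :=
  fun _ hA => hμ _ (hA.preimage hf.injOn)

theorem IsMeasure.eq_of_finite_diff (hμ : IsMeasure μ) (hfree : IsFree μ) {A B : Set ℕ}
    (hAB : (A \ B).Finite) (hBA : (B \ A).Finite) : μ A = μ B := by
  have hinter {A B : Set ℕ} (h : (A \ B).Finite) : μ A = μ (A ∩ B) :=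
    calc μ A = μ (A ∩ B ∪ A \ B) := by rw [inter_union_sdiff]
      _ = μ (A ∩ B) := by rw [hμ.2.2 _ _ disjoint_sdiff_inter.symm, hfree _ h, add_zero]
  rw [hinter hAB, hinter hBA, inter_comm]

theorem IsMeasure.eq_one_of_finite_compl (hμ : IsMeasure μ) (hfree : IsFree μ) {A : Set ℕ}
    (hA : Aᶜ.Finite) : μ A = 1 := by
  rw [hμ.eq_of_finite_diff hfree (B := univ) (by simp) (by rwa [← compl_eq_univ_sdiff]), hμ.2.1]

end Measure

theorem nonAtomic_of_modEq_two_pow {μ : Set ℕ → ℝ}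
    (hμ : ∀ k j, μ {n | n ≡ j [MOD 2 ^ k]} = 1 / 2 ^ k) : NonAtomic μ := by
  intro ε hε
  obtain ⟨k, hk⟩ := exists_pow_lt_of_lt_one hε (by norm_num : (1 / 2 : ℝ) < 1)
  refine ⟨2 ^ k, fun j => {n | n ≡ j [MOD 2 ^ k]}, fun i j hij => ?_, ?_, fun j => ?_⟩
  · refine disjoint_left.2 fun n hi hj => hij (Fin.ext ?_)
    exact Nat.ModEq.eq_of_lt_of_lt ((Nat.ModEq.symm hi).trans hj) i.2 j.2
  · exact eq_univ_of_forall fun n =>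
      mem_iUnion.2 ⟨⟨n % 2 ^ k, Nat.mod_lt _ (by positivity)⟩, (Nat.mod_modEq n _).symm⟩
  · rwa [hμ, ← one_div_pow]

section Limit

variable {ι X : Type*} [TopologicalSpace X]

theorem IsCompact.tendsto_limUnder [Nonempty X] {K : Set X} (hK : IsCompact K) (L : Ultrafilter ι)
    {f : ι → X} (hf : ∀ᶠ i in (L : Filter ι), f i ∈ K) :
    Tendsto f L (𝓝 (limUnder (L : Filter ι) f)) := by
  obtain ⟨a, -, ha⟩ := hK.ultrafilter_le_nhds (L.map f)
    (by rw [Ultrafilter.coe_map, le_principal_iff]; exact hf)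
  exact tendsto_nhds_limUnder ⟨a, by rwa [Ultrafilter.coe_map] at ha⟩

theorem limUnder_eq_of_eventually_eq [Nonempty X] [T2Space X] {l : Filter ι} [l.NeBot]
    {f : ι → X} {c : X} (hf : ∀ᶠ i in l, f i = c) : limUnder l f = c :=
  (tendsto_const_nhds.congr' (hf.mono fun _ h => h.symm)).limUnder_eq

theorem IsMeasure.limUnder (L : Ultrafilter ι) {μ : ι → Set ℕ → ℝ}
    (hμ : ∀ᶠ i in (L : Filter ι), IsMeasure (μ i)) :
    IsMeasure fun A => limUnder (L : Filter ι) fun i => μ i A := by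
  have hlim (A : Set ℕ) := isCompact_Icc.tendsto_limUnder L (f := fun i => μ i A)
    (hμ.mono fun _ h => h.1 A)
  refine ⟨fun A => isClosed_Icc.mem_of_tendsto (hlim A) (hμ.mono fun _ h => h.1 A),
    limUnder_eq_of_eventually_eq (hμ.mono fun _ h => h.2.1), fun A B hAB => ?_⟩
  exact (((hlim A).add (hlim B)).congr' (hμ.mono fun _ h => (h.2.2 A B hAB).symm)).limUnder_eq

end Limit

theorem isMeasure_ncard_inter_Iio_div {n : ℕ} (hn : 0 < n) :
    IsMeasure fun A => ((A ∩ Iio n).ncard : ℝ) / n := by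
  have hn' : (0 : ℝ) < n := by exact_mod_cast hn
  refine ⟨fun A => ⟨by positivity, ?_⟩, ?_, fun A B hAB => ?_⟩
  · rw [div_le_one hn']
    exact_mod_cast (ncard_le_ncard inter_subset_right (finite_Iio n)).trans (by simp)
  · simp [hn'.ne']
  · beta_reduce
    rw [union_inter_distrib_right, ncard_union_eq (hAB.mono inter_subset_left inter_subset_left)
      ((finite_Iio n).inter_of_right A) ((finite_Iio n).inter_of_right B)]
    push_cast
    ring

noncomputable def densityMeasure (U : Ultrafilter ℕ) (A : Set ℕ) : ℝ :=
  limUnder (U : Filter ℕ) fun n => ((A ∩ Iio n).ncard : ℝ) / n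

section Density

variable {U : Ultrafilter ℕ} (hU : (U : Filter ℕ) ≤ atTop)
include hU

theorem isMeasure_densityMeasure : IsMeasure (densityMeasure U) :=
  IsMeasure.limUnder U <| Eventually.mono (hU (eventually_gt_atTop 0))
    fun _ => isMeasure_ncard_inter_Iio_div

theorem extendsDensity_densityMeasure : ExtendsDensity (densityMeasure U) :=
  fun _ _ h => (h.mono_left hU).limUnder_eq

theorem isFree_densityMeasure : IsFree (densityMeasure U) := by
  refine fun A hA => extendsDensity_densityMeasure hU A 0 ?_
  refine tendsto_of_tendsto_of_tendsto_of_le_of_le tendsto_const_nhds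
    (tendsto_const_div_atTop_nhds_zero_nat (A.ncard : ℝ)) (fun n => by positivity) fun n => ?_
  gcongr
  exact inter_subset_left

end Density

theorem tendsto_ncard_modEq_inter_Iio_div {q : ℕ} (hq : 0 < q) (j : ℕ) :
    Tendsto (fun n : ℕ => (({m | m ≡ j [MOD q]} ∩ Iio n).ncard : ℝ) / n) atTop (𝓝 (1 / q)) := by
  have hq' : (0 : ℝ) < q := by exact_mod_cast hq
  have hcount (n : ℕ) :
      ({m | m ≡ j [MOD q]} ∩ Iio n).ncard = n / q + if j % q < n % q then 1 else 0 := by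
    rw [← Nat.count_modEq_card n hq, Nat.count_eq_card_filter_range, ← ncard_coe_finset]
    congr 1
    ext m
    simp [and_comm]
  have hbounds (n : ℕ) : (n : ℝ) / q - 1 ≤ (({m | m ≡ j [MOD q]} ∩ Iio n).ncard : ℝ) ∧
      (({m | m ≡ j [MOD q]} ∩ Iio n).ncard : ℝ) ≤ (n : ℝ) / q + 1 := by
    have hlow : (n : ℝ) < ((n / q : ℕ) : ℝ) * q + q := by
      exact_mod_cast Nat.lt_div_mul_add (a := n) hq
    have hup : ((n / q : ℕ) : ℝ) ≤ n / q := Nat.cast_div_le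
    rw [hcount]
    push_cast at hlow ⊢
    constructor
    · rw [sub_le_iff_le_add, div_le_iff₀ hq']
      split_ifs <;> nlinarith
    · split_ifs <;> linarith
  have hinv := tendsto_const_div_atTop_nhds_zero_nat (1 : ℝ)
  have hlower := (tendsto_const_nhds (x := 1 / (q : ℝ))).sub hinv
  have hupper := (tendsto_const_nhds (x := 1 / (q : ℝ))).add hinv
  rw [sub_zero] at hlower
  rw [add_zero] at hupper
  refine tendsto_of_tendsto_of_tendsto_of_le_of_le' hlower hupper ?_ ?_
  all_goals
    filter_upwards [eventually_gt_atTop 0] with n hn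
    have hn' : (0 : ℝ) < n := by exact_mod_cast hn
  · calc 1 / (q : ℝ) - 1 / n = ((n : ℝ) / q - 1) / n := by field_simp
      _ ≤ _ := by gcongr; exact (hbounds n).1
  · calc _ ≤ ((n : ℝ) / q + 1) / n := by gcongr; exact (hbounds n).2
      _ = 1 / (q : ℝ) + 1 / n := by field_simp

theorem densityMeasure_preimage_modEq_two_pow {U : Ultrafilter ℕ} (hU : (U : Filter ℕ) ≤ atTop)
    {x : ℕ → ℕ} (hmod : ∀ t, x t ≡ t [MOD 2 ^ t]) (k j : ℕ) :
    densityMeasure U (x ⁻¹' {n | n ≡ j [MOD 2 ^ k]}) = 1 / 2 ^ k := by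
  have hlarge {t : ℕ} (ht : t ∉ Iio k) : x t ≡ t [MOD 2 ^ k] :=
    (hmod t).of_dvd (pow_dvd_pow 2 (not_lt.1 ht))
  have hdiff : (x ⁻¹' {n | n ≡ j [MOD 2 ^ k]} \ {t | t ≡ j [MOD 2 ^ k]}).Finite :=
    (finite_Iio k).subset fun t ⟨hxt, ht⟩ => by_contra fun hk => ht ((hlarge hk).symm.trans hxt)
  have hdiff' : ({t | t ≡ j [MOD 2 ^ k]} \ x ⁻¹' {n | n ≡ j [MOD 2 ^ k]}).Finite :=
    (finite_Iio k).subset fun t ⟨ht, hxt⟩ => by_contra fun hk => hxt ((hlarge hk).trans ht)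
  rw [(isMeasure_densityMeasure hU).eq_of_finite_diff (isFree_densityMeasure hU) hdiff hdiff',
    extendsDensity_densityMeasure hU _ _ (tendsto_ncard_modEq_inter_Iio_div (by positivity) j)]
  norm_num

def IsDyadicallyDense (S : Set ℕ) : Prop := ∀ k j : ℕ, {n ∈ S | n ≡ j [MOD 2 ^ k]}.Infinite

theorem isDyadicallyDense_univ : IsDyadicallyDense univ := fun k j => by
  simpa using Nat.frequently_atTop_iff_infinite.1 (Nat.frequently_modEq (by positivity) j)

theorem isDyadicallyDense_range {x : ℕ → ℕ} (hx : StrictMono x) (hmod : ∀ t, x t ≡ t [MOD 2 ^ t]) :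
    IsDyadicallyDense (range x) := by
  intro k j
  have hinf : ({t | t ≡ j [MOD 2 ^ k]} \ Iio k).Infinite :=
    (Nat.frequently_atTop_iff_infinite.1 (Nat.frequently_modEq (by positivity) j)).sdiff
      (finite_Iio k)
  refine (hinf.image hx.injective.injOn).mono ?_
  rintro _ ⟨t, ⟨htj, hkt⟩, rfl⟩
  exact ⟨mem_range_self t, ((hmod t).of_dvd (pow_dvd_pow 2 (not_lt.1 hkt))).trans htj⟩

theorem exists_strictMono_mem_not_mem {D : ℕ → Set ℕ} (hD : ∀ t, (D t).Infinite) (B : ℕ → Set ℕ)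
    (hB : ∀ y, (B y).Finite) :
    ∃ x : ℕ → ℕ, StrictMono x ∧ (∀ t, x t ∈ D t) ∧ ∀ s t, s < t → x t ∉ B (x s) := by
  have hnext (F : Finset ℕ) (t : ℕ) : ∃ n ∈ D t, ∀ y ∈ F, y < n ∧ n ∉ B y := by
    obtain ⟨n, ⟨hnD, hnB⟩, hn⟩ :=
      ((hD t).sdiff (F.finite_toSet.biUnion fun y _ => hB y)).exists_gt (F.sup id)
    refine ⟨n, hnD, fun y hy => ⟨(Finset.le_sup (f := id) hy).trans_lt hn, fun h => hnB ?_⟩⟩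
    exact mem_biUnion hy h
  choose next hnextD hnext using hnext
  -- `F t` holds the values chosen before stage `t`.
  let F : ℕ → Finset ℕ := fun t => Nat.rec ∅ (fun t F => insert (next F t) F) t
  have hF {s t : ℕ} (hst : s < t) : next (F s) s ∈ F t := by
    induction hst with
    | refl => exact Finset.mem_insert_self _ _
    | step _ ih => exact Finset.mem_insert_of_mem ih
  exact ⟨fun t => next (F t) t, fun s t hst => (hnext _ _ _ (hF hst)).1, fun t => hnextD _ _,
    fun s t hst => (hnext _ _ _ (hF hst)).2⟩

theorem IsDyadicallyDense.exists_enumeration {S : Set ℕ} (hS : IsDyadicallyDense S) :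
    ∃ x : ℕ → ℕ, StrictMono x ∧ (∀ t, x t ∈ S) ∧ ∀ t, x t ≡ t [MOD 2 ^ t] := by
  obtain ⟨x, hx, hmem, -⟩ := exists_strictMono_mem_not_mem (fun t => hS t t) (fun _ => ∅)
    fun _ => finite_empty
  exact ⟨x, hx, fun t => (hmem t).1, fun t => (hmem t).2⟩

theorem IsDyadicallyDense.exists_measure {S : Set ℕ} (hS : IsDyadicallyDense S) :
    ∃ ν : Set ℕ → ℝ, IsMeasure ν ∧ IsFree ν ∧ (∀ A, (S \ A).Finite → ν A = 1) ∧
      ∀ k j, ν {n | n ≡ j [MOD 2 ^ k]} = 1 / 2 ^ k := by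
  obtain ⟨x, hx, hxS, hxmod⟩ := hS.exists_enumeration
  let U : Ultrafilter ℕ := .of atTop
  have hU : (U : Filter ℕ) ≤ atTop := Ultrafilter.of_le _
  refine ⟨fun A => densityMeasure U (x ⁻¹' A), (isMeasure_densityMeasure hU).preimage x,
    (isFree_densityMeasure hU).preimage hx.injective, fun A hA => ?_,
    densityMeasure_preimage_modEq_two_pow hU hxmod⟩
  exact (isMeasure_densityMeasure hU).eq_one_of_finite_compl (isFree_densityMeasure hU)
    ((hA.preimage hx.injective.injOn).subset fun t (ht : x t ∉ A) => ⟨hxS t, ht⟩)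

theorem exists_dense_selector_almost_subset {C : ℕ → Set ℕ}
    (hC : ∀ t, ∃ Z, IsDyadicallyDense Z ∧ ∀ s ≤ t, (Z \ C s).Finite) {P : ℕ → Set ℕ}
    (hPd : Pairwise (Disjoint on P)) (hPf : ∀ n, (P n).Finite) :
    ∃ T, IsDyadicallyDense T ∧ IsSelector T P ∧ ∀ n, (T \ C n).Finite := by
  choose Z hZ hZC using hC
  -- The `t`-th point is `≡ t [MOD 2 ^ t]` (so the range is dyadically dense), lies in
  -- `C 0, …, C t`, and avoids the pieces of `P` that contain earlier points.
  let D (t : ℕ) : Set ℕ := {n ∈ Z t | n ≡ t [MOD 2 ^ t]} ∩ ⋂ s ∈ Iic t, C s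
  have hD (t : ℕ) : (D t).Infinite := by
    refine ((hZ t t t).sdiff ((finite_Iic t).biUnion fun s hs => hZC t s hs)).mono ?_
    rintro n ⟨hn, hnC⟩
    exact ⟨hn, mem_iInter₂.2 fun s hs => by_contra fun h => hnC (mem_biUnion hs ⟨hn.1, h⟩)⟩
  let B (y : ℕ) : Set ℕ := ⋃ n ∈ {n | y ∈ P n}, P n
  have hB (y : ℕ) : (B y).Finite :=
    (Subsingleton.finite fun a ha b hb => hPd.eq (not_disjoint_iff.2 ⟨y, ha, hb⟩)).biUnion
      fun n _ => hPf n
  obtain ⟨x, hx, hxD, hxB⟩ := exists_strictMono_mem_not_mem hD B hB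
  refine ⟨range x, isDyadicallyDense_range hx fun t => (hxD t).1.2, ?_, fun n => ?_⟩
  · rintro n _ ⟨⟨s, rfl⟩, hs⟩ _ ⟨⟨t, rfl⟩, ht⟩
    have hsel {s t : ℕ} (hst : s < t) (hs : x s ∈ P n) (ht : x t ∈ P n) : False :=
      hxB s t hst (mem_biUnion hs ht)
    rcases lt_trichotomy s t with h | rfl | h
    · exact (hsel h hs ht).elim
    · rfl
    · exact (hsel h ht hs).elim
  · refine ((finite_Iio n).image x).subset ?_
    rintro _ ⟨⟨t, rfl⟩, htC⟩
    exact ⟨t, mem_Iio.2 (not_le.1 fun hnt => htC (mem_iInter₂.1 (hxD t).2 n hnt)), rfl⟩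

theorem exists_dense_selector_almost_subset_of_chain {J : Type*} [LinearOrder J] [Countable J]
    {C : J → Set ℕ} (hC : ∀ j, IsDyadicallyDense (C j))
    (hmono : ∀ j j', j < j' → (C j' \ C j).Finite)
    {P : ℕ → Set ℕ} (hPd : Pairwise (Disjoint on P)) (hPf : ∀ n, (P n).Finite) :
    ∃ T, IsDyadicallyDense T ∧ IsSelector T P ∧ ∀ j, (T \ C j).Finite := by
  rcases isEmpty_or_nonempty J with hJ | hJ
  · obtain ⟨T, hT, hTP, -⟩ := exists_dense_selector_almost_subset (C := fun _ => univ)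
      (fun _ => ⟨univ, isDyadicallyDense_univ, by simp⟩) hPd hPf
    exact ⟨T, hT, hTP, isEmptyElim⟩
  obtain ⟨g, hg⟩ := exists_surjective_nat J
  have hC' (t : ℕ) : ∃ Z, IsDyadicallyDense Z ∧ ∀ s ≤ t, (Z \ C (g s)).Finite := by
    let jmax := (Finset.range (t + 1)).sup' Finset.nonempty_range_add_one g
    refine ⟨C jmax, hC jmax, fun s hs => ?_⟩
    rcases (Finset.le_sup' g (Finset.mem_range_succ_iff.2 hs)).eq_or_lt with h | h
    · simp [jmax, h]
    · exact hmono _ _ h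
  obtain ⟨T, hT, hTP, hTC⟩ := exists_dense_selector_almost_subset hC' hPd hPf
  exact ⟨T, hT, hTP, hg.forall.2 hTC⟩

theorem exists_dense_selector_tower {ι : Type*} [LinearOrder ι] [WellFoundedLT ι]
    (hcnt : ∀ i : ι, (Iio i).Countable) {P : ι → ℕ → Set ℕ}
    (hPd : ∀ i, Pairwise (Disjoint on P i)) (hPf : ∀ i n, (P i n).Finite) :
    ∃ T : ι → Set ℕ, (∀ i, IsDyadicallyDense (T i)) ∧ (∀ i, IsSelector (T i) (P i)) ∧
      ∀ i j, j < i → (T i \ T j).Finite := by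
  let good (i : ι) (T' : ∀ j, j < i → Set ℕ) (S : Set ℕ) : Prop :=
    IsDyadicallyDense S ∧ IsSelector S (P i) ∧ ∀ j hj, (S \ T' j hj).Finite
  -- `T i` is some set that works at stage `i`, if there is one; by induction there always is.
  let T : ι → Set ℕ := wellFounded_lt.fix fun i T' => Classical.epsilon (good i T')
  have hT (i : ι) : good i (fun j _ => T j) (T i) := by
    induction i using WellFoundedLT.induction with
    | ind i ih =>
      rw [show T i = _ from wellFounded_lt.fix_eq _ i]
      apply Classical.epsilon_spec
      have := (hcnt i).to_subtype
      obtain ⟨S, hS, hSP, hST⟩ := exists_dense_selector_almost_subset_of_chain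
        (J := Iio i) (C := fun j => T j) (fun j => (ih j j.2).1)
        (fun j j' h => (ih j' j'.2).2.2 j h) (hPd i) (hPf i)
      exact ⟨S, hS, hSP, fun j hj => hST ⟨j, hj⟩⟩
  exact ⟨T, fun i => (hT i).1, fun i => (hT i).2.1, fun i j hj => (hT i).2.2 j hj⟩

def FinitePartition : Type := {Q : ℕ → Set ℕ // IsPartition Q ∧ ∀ n, (Q n).Finite}

instance : Inhabited FinitePartition :=
  ⟨⟨fun n => {n}, ⟨fun _ _ h => disjoint_singleton.2 h,
    eq_univ_of_forall fun n => mem_iUnion.2 ⟨n, rfl⟩⟩, fun n => finite_singleton n⟩⟩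

theorem exists_qMeasure_of_surjective {ι : Type*} [LinearOrder ι] [WellFoundedLT ι]
    (hcnt : ∀ i : ι, (Iio i).Countable) {P : ι → FinitePartition} (hP : Surjective P) :
    ∃ μ : Set ℕ → ℝ, IsMeasure μ ∧ IsFree μ ∧ NonAtomic μ ∧ IsQMeasure μ := by
  have : Nonempty ι := hP.nonempty
  obtain ⟨T, hTdense, hTsel, hTmono⟩ := exists_dense_selector_tower hcnt
    (P := fun i => (P i).1) (fun i => (P i).2.1.1) (fun i => (P i).2.2)
  choose ν hν hνfree hνT hνmod using fun i => (hTdense i).exists_measure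
  let W : Ultrafilter ι := .of atTop
  let μ (A : Set ℕ) : ℝ := limUnder (W : Filter ι) fun i => ν i A
  have hμ {A : Set ℕ} {c : ℝ} (h : ∀ᶠ i in (W : Filter ι), ν i A = c) : μ A = c :=
    limUnder_eq_of_eventually_eq h
  refine ⟨μ, IsMeasure.limUnder W (.of_forall hν), fun A hA => hμ (.of_forall (hνfree · A hA)),
    nonAtomic_of_modEq_two_pow fun k j => hμ (.of_forall (hνmod · k j)), fun Q hQ hQf => ?_⟩
  obtain ⟨i, hi⟩ := hP ⟨Q, hQ, hQf⟩
  have hPi : (P i).1 = Q := congrArg Subtype.val hi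
  refine ⟨T i, hPi ▸ hTsel i, hμ ?_⟩
  filter_upwards [Ultrafilter.of_le (atTop : Filter ι) (Ici_mem_atTop i)] with i' hi'
  exact hνT i' _ ((eq_or_lt_of_le hi').elim (fun h => by simp [h]) (hTmono i' i))

theorem exists_surjective_finitePartition_of_CH (hCH : CH) :
    ∃ P : (Cardinal.aleph.{0} 1).ord.ToType → FinitePartition, Surjective P := by
  refine Function.exists_surjective_iff.2 ⟨inferInstance, (Cardinal.le_def _ _).1 ?_⟩
  calc Cardinal.mk FinitePartition ≤ Cardinal.mk (ℕ → Set ℕ) := Cardinal.mk_subtype_le _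
    _ = 2 ^ Cardinal.aleph0 := by
      rw [← Cardinal.power_def, Cardinal.mk_set, Cardinal.mk_nat, ← Cardinal.power_mul,
        Cardinal.aleph0_mul_aleph0]
    _ = _ := by rw [hCH, Cardinal.mk_toType, Cardinal.card_ord]

theorem countable_Iio_toType_ord_aleph_one (i : (Cardinal.aleph.{0} 1).ord.ToType) :
    (Iio i).Countable :=
  Cardinal.le_aleph0_iff_set_countable.1
    (Cardinal.lt_aleph_one_iff.1 (by simpa using Cardinal.mk_Iio_lt i))

/-- Under CH there exists a non-atomic free Q-measure on ℕ. -/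
theorem stmt_5 (hCH : CH) :
    ∃ μ : Set ℕ → ℝ, IsMeasure μ ∧ IsFree μ ∧ NonAtomic μ ∧ IsQMeasure μ := by
  obtain ⟨P, hP⟩ := exists_surjective_finitePartition_of_CH hCH
  exact exists_qMeasure_of_surjective countable_Iio_toType_ord_aleph_one hP
end
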